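/- Let A and A' be two n-dimensional algebras over a finite field K. If A and A' are isotopic, then the vertex-colored graphs G₁(A) and G₁(A') are isomorphic. Reciprocally, if G₁(A) and G₁(A') are isomorphic, then there exist three bijective maps f, g, h from A to A' (not necessarily linear) such that f(u)g(v) = h(uv) for all u, v ∈ A. -/

import Mathlib

/-- Vertices of the graphs `G₁(A)` and `G₂(A)`: row vertices `r u`, column
vertices `c u`, symbol vertices `s u` and cell vertices `t u v`. -/
inductive Vert (A : Type*) : Type _
  | r : A → Vert A
  | c : A → Vert A
  | s : A → Vert A
  | t : A → A → Vert A

section Graphs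

variable {A : Type*} [Zero A]

/-- The left annihilator `Ann_{A⁻}(A)` of the algebra with product `mul`. -/
def annL (mul : A → A → A) : Set A := {u | ∀ v, mul u v = 0}

/-- The right annihilator `Ann_{A⁺}(A)` of the algebra with product `mul`. -/
def annR (mul : A → A → A) : Set A := {u | ∀ v, mul v u = 0}

/-- The derived set `A² = {uv : u, v ∈ A}` of the algebra with product `mul`. -/
def derived (mul : A → A → A) : Set A := {w | ∃ u v, mul u v = w}

/-- The vertex set of `G₁(A)` and `G₂(A)`:
`R_A = {r_u : u ∈ A ∖ Ann_{A⁻}(A)}`, `C_A = {c_u : u ∈ A ∖ Ann_{A⁺}(A)}`,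
`S_A = {s_u : u ∈ A² ∖ {0}}`, `T_A = {t_{u,v} : u, v ∈ A, uv ≠ 0}`. -/
def IsVert (mul : A → A → A) : Vert A → Prop
  | .r u => u ∉ annL mul
  | .c u => u ∉ annR mul
  | .s u => u ∈ derived mul ∧ u ≠ 0
  | .t u v => mul u v ≠ 0

/-- The adjacency relation of `G₁(A)`: edges `r_u t_{u,v}`, `c_v t_{u,v}` and
`s_{uv} t_{u,v}` for every `u, v ∈ A` with `uv ≠ 0`. -/
inductive G1Adj (mul : A → A → A) : Vert A → Vert A → Prop
  | rt (u v : A) : mul u v ≠ 0 → G1Adj mul (.r u) (.t u v)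
  | tr (u v : A) : mul u v ≠ 0 → G1Adj mul (.t u v) (.r u)
  | ct (u v : A) : mul u v ≠ 0 → G1Adj mul (.c v) (.t u v)
  | tc (u v : A) : mul u v ≠ 0 → G1Adj mul (.t u v) (.c v)
  | st (u v : A) : mul u v ≠ 0 → G1Adj mul (.s (mul u v)) (.t u v)
  | ts (u v : A) : mul u v ≠ 0 → G1Adj mul (.t u v) (.s (mul u v))

lemma G1Adj.ne {mul : A → A → A} {x y : Vert A} (h : G1Adj mul x y) : x ≠ y := by
  cases h <;> simp

/-- The graph `G₁(A)`, on the vertex set `R_A ∪ C_A ∪ S_A ∪ T_A`. -/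
def G1 (mul : A → A → A) : SimpleGraph {x : Vert A // IsVert mul x} where
  Adj x y := G1Adj mul x.1 y.1
  symm := by constructor; rintro ⟨x, hx⟩ ⟨y, hy⟩ h; cases h <;> constructor <;> assumption
  loopless := ⟨fun x h => G1Adj.ne h rfl⟩

/-- The adjacency relation of `G₂(A)`: that of `G₁(A)` together with the extra
edges `r_u c_u` for `u ∈ A ∖ Ann_A(A)`, `c_u s_u` for `u ∈ A² ∖ Ann_{A⁺}(A)`
and `r_u s_u` for `u ∈ A² ∖ Ann_{A⁻}(A)`. -/
inductive G2Adj (mul : A → A → A) : Vert A → Vert A → Prop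
  | g1 {x y : Vert A} : G1Adj mul x y → G2Adj mul x y
  | rc (u : A) : u ∉ annL mul ∩ annR mul → G2Adj mul (.r u) (.c u)
  | cr (u : A) : u ∉ annL mul ∩ annR mul → G2Adj mul (.c u) (.r u)
  | cs (u : A) : u ∈ derived mul \ annR mul → G2Adj mul (.c u) (.s u)
  | sc (u : A) : u ∈ derived mul \ annR mul → G2Adj mul (.s u) (.c u)
  | rs (u : A) : u ∈ derived mul \ annL mul → G2Adj mul (.r u) (.s u)
  | sr (u : A) : u ∈ derived mul \ annL mul → G2Adj mul (.s u) (.r u)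

lemma G2Adj.ne {mul : A → A → A} {x y : Vert A} (h : G2Adj mul x y) : x ≠ y := by
  cases h with
  | g1 h => exact h.ne
  | _ => simp

/-- The graph `G₂(A)`, on the vertex set `R_A ∪ C_A ∪ S_A ∪ T_A`. -/
def G2 (mul : A → A → A) : SimpleGraph {x : Vert A // IsVert mul x} where
  Adj x y := G2Adj mul x.1 y.1
  symm := by
    constructor
    rintro ⟨x, hx⟩ ⟨y, hy⟩ h
    cases h with
    | g1 h => exact .g1 (by cases h <;> constructor <;> assumption)
    | rc u h => exact .cr u h
    | cr u h => exact .rc u h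
    | cs u h => exact .sc u h
    | sc u h => exact .cs u h
    | rs u h => exact .sr u h
    | sr u h => exact .rs u h
  loopless := ⟨fun x h => G2Adj.ne h rfl⟩

/-- The color of a vertex: row, column, symbol or cell. -/
def Vert.color : Vert A → Fin 4
  | .r _ => 0
  | .c _ => 1
  | .s _ => 2
  | .t _ _ => 3

end Graphs

/-!
An isotopism `(f, g, h)` relabels `r_u, c_u, s_u, t_{u,v}` as `r_{f u}, c_{g u}, s_{h u},
t_{f u, g v}`, which is a colour-preserving isomorphism `G₁(A) ≃ G₁(A')`.

Conversely, a colour-preserving isomorphism restricts to bijections `R`, `C`, `S` between the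
row, column and symbol classes. The image of `t_{u,v}` is a cell vertex adjacent to `r_{R u}`,
`c_{C v}` and `s_{S (uv)}`, which forces `R u * C v = S (uv)`. Since `|A| = |A'|`, the
complements of these classes (the annihilators and `A ∖ (A² ∖ {0})`) have equal sizes, so
`R`, `C`, `S` extend to bijections `A → A'`, the last one fixing `0`; the isotopy identity for
`uv = 0` follows by running the same argument for the inverse isomorphism.
-/

namespace Equiv

variable {α β : Type*} {p : α → Prop} {q : β → Prop}

theorem exists_extend_subtype [Finite α] [Finite β] (hcard : Nat.card α = Nat.card β)
    (e : {a // p a} ≃ {b // q b}) :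
    ∃ E : α ≃ β, (∀ a (ha : p a), E a = e ⟨a, ha⟩) ∧ ∀ a, ¬p a → ¬q (E a) := by
  classical
  obtain ⟨e'⟩ : Nonempty ({a // ¬p a} ≃ {b // ¬q b}) := by
    have hα := Nat.card_congr (sumCompl p)
    have hβ := Nat.card_congr (sumCompl q)
    rw [Nat.card_sum] at hα hβ
    rw [← Finite.card_eq]
    have := Nat.card_congr e
    omega
  refine ⟨(sumCompl p).symm.trans ((sumCongr e e').trans (sumCompl q)), fun a ha => ?_,
    fun a ha => ?_⟩
  · simp [ha]
  · simpa [ha] using (e' ⟨a, ha⟩).2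

theorem exists_extend_subtype_apply_eq [Finite α] [Finite β] (hcard : Nat.card α = Nat.card β)
    (e : {a // p a} ≃ {b // q b}) {a₀ : α} {b₀ : β} (ha₀ : ¬p a₀) (hb₀ : ¬q b₀) :
    ∃ E : α ≃ β, E a₀ = b₀ ∧ ∀ a (ha : p a), E a = e ⟨a, ha⟩ := by
  classical
  obtain ⟨E, hE, -⟩ := exists_extend_subtype hcard e
  refine ⟨E.trans (swap (E a₀) b₀), swap_apply_left _ _, fun a ha => ?_⟩
  have hne : e ⟨a, ha⟩ ≠ b₀ := fun h => hb₀ (h ▸ (e ⟨a, ha⟩).2)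
  have ha₀a : a ≠ a₀ := fun h => ha₀ (h ▸ ha)
  rw [trans_apply, hE a ha, swap_apply_of_ne_of_ne (hE a ha ▸ E.injective.ne ha₀a) hne]

end Equiv

namespace Vert

variable {A A' : Type*}

def map (f g h : A → A') : Vert A → Vert A'
  | r u => r (f u)
  | c u => c (g u)
  | s u => s (h u)
  | t u v => t (f u) (g v)

theorem map_map {A'' : Type*} (f g h : A → A') (f' g' h' : A' → A'') (x : Vert A) :
    (x.map f g h).map f' g' h' = x.map (f' ∘ f) (g' ∘ g) (h' ∘ h) := by
  cases x <;> rfl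

theorem map_id (x : Vert A) : x.map id id id = x := by
  cases x <;> rfl

def mapEquiv (f g h : A ≃ A') : Vert A ≃ Vert A' where
  toFun := map f g h
  invFun := map f.symm g.symm h.symm
  left_inv x := by simp [map_map, map_id]
  right_inv x := by simp [map_map, map_id]

theorem color_map (f g h : A → A') (x : Vert A) :
    (x.map f g h).color = x.color := by
  cases x <;> rfl

end Vert

section Isotopy

variable {A A' : Type*} {mul : A → A → A} {mul' : A' → A' → A'}

theorem isotopy_symm (f g h : A ≃ A') (hfgh : ∀ u v, mul' (f u) (g v) = h (mul u v)) (u v : A') :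
    mul (f.symm u) (g.symm v) = h.symm (mul' u v) := by
  rw [Equiv.eq_symm_apply, ← hfgh, f.apply_symm_apply, g.apply_symm_apply]

variable [Zero A] [Zero A'] {f g h : A → A'}

theorem mul_ne_zero_of_isotopy (hh : Function.Injective h) (h0 : h 0 = 0)
    (hfgh : ∀ u v, mul' (f u) (g v) = h (mul u v)) {u v : A} (huv : mul u v ≠ 0) :
    mul' (f u) (g v) ≠ 0 := by
  rw [hfgh, ← h0]
  exact hh.ne huv

theorem IsVert.map_of_isotopy (hh : Function.Injective h) (h0 : h 0 = 0)
    (hfgh : ∀ u v, mul' (f u) (g v) = h (mul u v)) {x : Vert A} (hx : IsVert mul x) :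
    IsVert mul' (x.map f g h) := by
  have hne : ∀ {u v}, mul u v ≠ 0 → mul' (f u) (g v) ≠ 0 := mul_ne_zero_of_isotopy hh h0 hfgh
  cases x with
  | r u => exact fun hu => hx fun v => not_not.1 fun hv => hne hv (hu (g v))
  | c u => exact fun hu => hx fun v => not_not.1 fun hv => hne hv (hu (f v))
  | s w =>
    obtain ⟨⟨u, v, rfl⟩, hw⟩ := hx
    exact ⟨⟨f u, g v, hfgh u v⟩, h0 ▸ hh.ne hw⟩
  | t u v => exact hne hx

theorem G1Adj.map_of_isotopy (hh : Function.Injective h) (h0 : h 0 = 0)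
    (hfgh : ∀ u v, mul' (f u) (g v) = h (mul u v)) {x y : Vert A} (hxy : G1Adj mul x y) :
    G1Adj mul' (x.map f g h) (y.map f g h) := by
  have hne : ∀ {u v}, mul u v ≠ 0 → mul' (f u) (g v) ≠ 0 := mul_ne_zero_of_isotopy hh h0 hfgh
  cases hxy with
  | rt u v huv => exact .rt _ _ (hne huv)
  | tr u v huv => exact .tr _ _ (hne huv)
  | ct u v huv => exact .ct _ _ (hne huv)
  | tc u v huv => exact .tc _ _ (hne huv)
  | st u v huv => simpa only [Vert.map, hfgh] using G1Adj.st (mul := mul') _ _ (hne huv)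
  | ts u v huv => simpa only [Vert.map, hfgh] using G1Adj.ts (mul := mul') _ _ (hne huv)

def G1.isoOfIsotopy (f g h : A ≃ A') (h0 : h 0 = 0)
    (hfgh : ∀ u v, mul' (f u) (g v) = h (mul u v)) : G1 mul ≃g G1 mul' :=
  have h0' : h.symm 0 = 0 := h.symm_apply_eq.2 h0.symm
  have hfgh' := isotopy_symm f g h hfgh
  { toEquiv := (Vert.mapEquiv f g h).subtypeEquiv fun x =>
      ⟨IsVert.map_of_isotopy h.injective h0 hfgh, fun hx => by
        simpa [Vert.mapEquiv, Vert.map_map, Vert.map_id] using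
          IsVert.map_of_isotopy h.symm.injective h0' hfgh' hx⟩
    map_rel_iff' := fun {x y} =>
      ⟨fun hxy => show G1Adj mul x.1 y.1 by
        simpa [Vert.mapEquiv, Vert.map_map, Vert.map_id] using
          G1Adj.map_of_isotopy h.symm.injective h0' hfgh' hxy,
        G1Adj.map_of_isotopy h.injective h0 hfgh⟩ }

theorem exists_colorIso_of_isotopy (f g h : A ≃ A') (h0 : h 0 = 0)
    (hfgh : ∀ u v, mul' (f u) (g v) = h (mul u v)) :
    ∃ φ : G1 mul ≃g G1 mul', ∀ x, (φ x).1.color = x.1.color :=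
  ⟨G1.isoOfIsotopy f g h h0 hfgh, fun x => Vert.color_map f g h x.1⟩

end Isotopy

theorem Vert.exists_eq_t_of_color {A : Type*} {x : Vert A} (hx : x.color = 3) :
    ∃ u v, x = .t u v := by
  cases x <;> simp_all [Vert.color]

section ColorClasses

variable {A A' : Type*} {mul : A → A → A} {mul' : A' → A' → A'}

def IsColorConstructor (k : A → Vert A) (i : Fin 4) : Prop :=
  Function.Injective k ∧ ∀ x : Vert A, x.color = i ↔ ∃ u, k u = x

theorem isColorConstructor_r : IsColorConstructor (Vert.r : A → Vert A) 0 :=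
  ⟨fun _ _ => Vert.r.inj, by rintro (_ | _ | _ | _) <;> simp [Vert.color]⟩

theorem isColorConstructor_c : IsColorConstructor (Vert.c : A → Vert A) 1 :=
  ⟨fun _ _ => Vert.c.inj, by rintro (_ | _ | _ | _) <;> simp [Vert.color]⟩

theorem isColorConstructor_s : IsColorConstructor (Vert.s : A → Vert A) 2 :=
  ⟨fun _ _ => Vert.s.inj, by rintro (_ | _ | _ | _) <;> simp [Vert.color]⟩

variable [Zero A] [Zero A']

abbrev ColorClass (mul : A → A → A) (i : Fin 4) : Type _ :=
  {x : {x : Vert A // IsVert mul x} // x.1.color = i}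

noncomputable def IsColorConstructor.equivColorClass {k : A → Vert A} {i : Fin 4}
    (hk : IsColorConstructor k i) (mul : A → A → A) :
    {u // IsVert mul (k u)} ≃ ColorClass mul i :=
  Equiv.ofBijective (fun u => ⟨⟨k u, u.2⟩, (hk.2 _).2 ⟨u, rfl⟩⟩)
    ⟨fun _ _ huv => Subtype.ext (hk.1 (congrArg (·.1.1) huv)), fun ⟨⟨x, hx⟩, hxi⟩ => by
      obtain ⟨u, rfl⟩ := (hk.2 x).1 hxi
      exact ⟨⟨u, hx⟩, rfl⟩⟩

variable (ψ : G1 mul ≃g G1 mul')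

theorem color_symm_apply (hψ : ∀ x, (ψ x).1.color = x.1.color) (y) :
    (ψ.symm y).1.color = y.1.color := by
  simpa using (hψ (ψ.symm y)).symm

variable (hψ : ∀ x, (ψ x).1.color = x.1.color)

def ColorClass.congr (i : Fin 4) : ColorClass mul i ≃ ColorClass mul' i :=
  ψ.toEquiv.subtypeEquiv fun x => by rw [← hψ x]; rfl

noncomputable def labelEquiv {k : A → Vert A} {k' : A' → Vert A'} {i : Fin 4}
    (hk : IsColorConstructor k i) (hk' : IsColorConstructor k' i) :
    {u // IsVert mul (k u)} ≃ {u // IsVert mul' (k' u)} :=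
  (hk.equivColorClass mul).trans
    ((ColorClass.congr ψ hψ i).trans (hk'.equivColorClass mul').symm)

variable {k : A → Vert A} {k' : A' → Vert A'} {i : Fin 4}
  (hk : IsColorConstructor k i) (hk' : IsColorConstructor k' i)

theorem labelEquiv_spec (u : A) (hu : IsVert mul (k u)) :
    (ψ ⟨k u, hu⟩).1 = k' (labelEquiv ψ hψ hk hk' ⟨u, hu⟩) :=
  (congrArg (·.1.1) ((hk'.equivColorClass mul').apply_symm_apply
    (ColorClass.congr ψ hψ i (hk.equivColorClass mul ⟨u, hu⟩)))).symm

theorem labelEquiv_symm :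
    labelEquiv ψ.symm (color_symm_apply ψ hψ) hk' hk = (labelEquiv ψ hψ hk hk').symm :=
  rfl

end ColorClasses

theorem G1Adj.eq_of_r_t {A : Type*} [Zero A] {mul : A → A → A} {a u v : A}
    (h : G1Adj mul (.r a) (.t u v)) : a = u := by
  cases h; rfl

theorem G1Adj.eq_of_c_t {A : Type*} [Zero A] {mul : A → A → A} {a u v : A}
    (h : G1Adj mul (.c a) (.t u v)) : a = v := by
  cases h; rfl

theorem G1Adj.eq_of_s_t {A : Type*} [Zero A] {mul : A → A → A} {a u v : A}
    (h : G1Adj mul (.s a) (.t u v)) : a = mul u v := by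
  cases h; rfl

section ColorIso

variable {A A' : Type*} [Zero A] [Zero A'] {mul : A → A → A} {mul' : A' → A' → A'}

theorem isVert_r_of_mul_ne_zero {u v : A} (huv : mul u v ≠ 0) : IsVert mul (.r u) :=
  fun h => huv (h v)

theorem isVert_c_of_mul_ne_zero {u v : A} (huv : mul u v ≠ 0) : IsVert mul (.c v) :=
  fun h => huv (h u)

theorem isVert_s_of_mul_ne_zero {u v : A} (huv : mul u v ≠ 0) : IsVert mul (.s (mul u v)) :=
  ⟨⟨u, v, rfl⟩, huv⟩

variable (ψ : G1 mul ≃g G1 mul') (hψ : ∀ x, (ψ x).1.color = x.1.color)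

noncomputable abbrev rowEquiv : {u // IsVert mul (.r u)} ≃ {u // IsVert mul' (.r u)} :=
  labelEquiv ψ hψ isColorConstructor_r isColorConstructor_r

noncomputable abbrev colEquiv : {u // IsVert mul (.c u)} ≃ {u // IsVert mul' (.c u)} :=
  labelEquiv ψ hψ isColorConstructor_c isColorConstructor_c

noncomputable abbrev symbolEquiv : {u // IsVert mul (.s u)} ≃ {u // IsVert mul' (.s u)} :=
  labelEquiv ψ hψ isColorConstructor_s isColorConstructor_s

theorem mul_rowEquiv_colEquiv {u v : A} (huv : mul u v ≠ 0) :
    mul' (rowEquiv ψ hψ ⟨u, isVert_r_of_mul_ne_zero huv⟩)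
        (colEquiv ψ hψ ⟨v, isVert_c_of_mul_ne_zero huv⟩) =
      symbolEquiv ψ hψ ⟨mul u v, isVert_s_of_mul_ne_zero huv⟩ := by
  have adj : ∀ {x y : {x // IsVert mul x}}, G1Adj mul x.1 y.1 → G1Adj mul' (ψ x).1 (ψ y).1 :=
    fun h => ψ.map_rel_iff.2 h
  obtain ⟨a, b, hab⟩ := Vert.exists_eq_t_of_color (hψ ⟨.t u v, huv⟩)
  have hr := adj (x := ⟨_, isVert_r_of_mul_ne_zero huv⟩) (y := ⟨.t u v, huv⟩) (.rt u v huv)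
  have hc := adj (x := ⟨_, isVert_c_of_mul_ne_zero huv⟩) (y := ⟨.t u v, huv⟩) (.ct u v huv)
  have hs := adj (x := ⟨_, isVert_s_of_mul_ne_zero huv⟩) (y := ⟨.t u v, huv⟩) (.st u v huv)
  rw [hab, labelEquiv_spec ψ hψ isColorConstructor_r isColorConstructor_r] at hr
  rw [hab, labelEquiv_spec ψ hψ isColorConstructor_c isColorConstructor_c] at hc
  rw [hab, labelEquiv_spec ψ hψ isColorConstructor_s isColorConstructor_s] at hs
  rw [hr.eq_of_r_t, hc.eq_of_c_t, hs.eq_of_s_t]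

theorem mul_ne_zero_of_mul_rowEquiv_colEquiv (u : {u // IsVert mul (.r u)})
    (v : {v // IsVert mul (.c v)}) (h : mul' (rowEquiv ψ hψ u) (colEquiv ψ hψ v) ≠ 0) :
    mul u v ≠ 0 := by
  have hsymm := mul_rowEquiv_colEquiv ψ.symm (color_symm_apply ψ hψ) h
  have hu : rowEquiv ψ.symm (color_symm_apply ψ hψ) ⟨_, (rowEquiv ψ hψ u).2⟩ = u :=
    (rowEquiv ψ hψ).symm_apply_apply u
  have hv : colEquiv ψ.symm (color_symm_apply ψ hψ) ⟨_, (colEquiv ψ hψ v).2⟩ = v :=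
    (colEquiv ψ hψ).symm_apply_apply v
  rw [hu, hv] at hsymm
  exact hsymm ▸ (symbolEquiv ψ.symm _ _).2.2

end ColorIso

theorem exists_bijective_isotopy_of_colorIso {A A' : Type*} [Zero A] [Zero A'] [Finite A]
    [Finite A'] (hcard : Nat.card A = Nat.card A') {mul : A → A → A} {mul' : A' → A' → A'}
    (ψ : G1 mul ≃g G1 mul') (hψ : ∀ x, (ψ x).1.color = x.1.color) :
    ∃ f g h : A → A', Function.Bijective f ∧ Function.Bijective g ∧ Function.Bijective h ∧
      ∀ u v, mul' (f u) (g v) = h (mul u v) := by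
  obtain ⟨F, hF, hF_ann⟩ := Equiv.exists_extend_subtype hcard (rowEquiv ψ hψ)
  obtain ⟨G, hG, hG_ann⟩ := Equiv.exists_extend_subtype hcard (colEquiv ψ hψ)
  obtain ⟨H, hH0, hH⟩ := Equiv.exists_extend_subtype_apply_eq hcard (symbolEquiv ψ hψ)
    (a₀ := 0) (b₀ := 0) (fun h => h.2 rfl) (fun h => h.2 rfl)
  refine ⟨F, G, H, F.bijective, G.bijective, H.bijective, fun u v => ?_⟩
  by_cases huv : mul u v = 0
  · rw [huv, hH0]
    by_cases hu : IsVert mul (.r u)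
    · by_cases hv : IsVert mul (.c v)
      · rw [hF u hu, hG v hv]
        by_contra h
        exact mul_ne_zero_of_mul_rowEquiv_colEquiv ψ hψ _ _ h huv
      · exact not_not.1 (hG_ann v hv) (F u)
    · exact not_not.1 (hF_ann u hu) (G v)
  · rw [hF u (isVert_r_of_mul_ne_zero huv), hG v (isVert_c_of_mul_ne_zero huv),
      hH _ (isVert_s_of_mul_ne_zero huv)]
    exact mul_rowEquiv_colEquiv ψ hψ huv

theorem stmt_16 {K A A' : Type*} [Field K] [Finite K]
    [AddCommGroup A] [Module K A] [AddCommGroup A'] [Module K A']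
    [Module.Finite K A] [Module.Finite K A'] (n : ℕ)
    (hA : Module.finrank K A = n) (hA' : Module.finrank K A' = n)
    (mul : A →ₗ[K] A →ₗ[K] A) (mul' : A' →ₗ[K] A' →ₗ[K] A') :
    ((∃ f g h : A ≃ₗ[K] A', ∀ u v : A, mul' (f u) (g v) = h (mul u v)) →
      ∃ φ : (G1 fun a b : A => mul a b) ≃g (G1 fun a b : A' => mul' a b),
        ∀ x, (φ x).1.color = x.1.color) ∧
    ((∃ φ : (G1 fun a b : A => mul a b) ≃g (G1 fun a b : A' => mul' a b),
        ∀ x, (φ x).1.color = x.1.color) →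
      ∃ f g h : A → A',
        Function.Bijective f ∧ Function.Bijective g ∧ Function.Bijective h ∧
          ∀ u v : A, mul' (f u) (g v) = h (mul u v)) := by
  refine ⟨fun ⟨f, g, h, hfgh⟩ => ?_, fun ⟨φ, hφ⟩ => ?_⟩
  · exact exists_colorIso_of_isotopy f.toEquiv g.toEquiv h.toEquiv h.map_zero hfgh
  · have : Finite A := Module.finite_of_finite K
    have : Finite A' := Module.finite_of_finite K
    exact exists_bijective_isotopy_of_colorIso
      (Nat.card_congr (LinearEquiv.ofFinrankEq A A' (hA.trans hA'.symm)).toEquiv) φ hφ
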